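/- arXiv:1108.4224 — 2 statements merged into one kernel-verified Lean document; each statement's English description precedes it below -/
import Mathlib

section
/- With γ⁽ᵏ⁾ ∈ 𝔽₂[x] defined by γ⁽⁰⁾ = 0, γ⁽¹⁾ = 1, γ⁽ᵏ⁾ = x·γ⁽ᵏ⁻¹⁾ + γ⁽ᵏ⁻²⁾, we have γ^(2^k) = x^(2^k − 1) for all k ≥ 0. -/
open Polynomial

noncomputable def gam : ℕ → Polynomial (ZMod 2)
  | 0 => 0
  | 1 => 1
  | (k + 2) => Polynomial.X * gam (k + 1) + gam k

/-!
The sequence `gam` is the Fibonacci polynomial sequence over `𝔽₂`, so it satisfies the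
Fibonacci addition formula. For `m + n + 1 = 2 n` it gives `gam (2 n) = gam n (gam (n + 1) + gam (n - 1))`,
which in characteristic two collapses to `gam (2 n) = X gam n ^ 2`; iterating from `gam 1 = 1`
yields the claim.
-/

theorem gam_add_two (k : ℕ) : gam (k + 2) = X * gam (k + 1) + gam k := rfl

theorem gam_add_add_one (m : ℕ) :
    ∀ n, gam (m + n + 1) = gam (m + 1) * gam (n + 1) + gam m * gam n
  | 0 => by simp [gam]
  | 1 => by simp [gam, mul_comm]
  | n + 2 => by
    have ih₁ := gam_add_add_one m (n + 1)
    have ih₀ := gam_add_add_one m n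
    rw [show m + (n + 2) + 1 = m + n + 1 + 2 by omega, gam_add_two,
      show m + n + 1 + 1 = m + (n + 1) + 1 by omega, gam_add_two (n + 1), gam_add_two n]
    rw [gam_add_two n] at ih₁
    linear_combination X * ih₁ + ih₀

theorem gam_two_mul (n : ℕ) : gam (2 * n) = X * gam n ^ 2 := by
  cases n with
  | zero => simp [gam]
  | succ n =>
    have h := gam_add_add_one (n + 1) n
    rw [show n + 1 + n + 1 = 2 * (n + 1) by omega, gam_add_two] at h
    linear_combination h + gam (n + 1) * gam n * CharTwo.two_eq_zero (R := (ZMod 2)[X])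

theorem gam_two_pow (k : ℕ) :
    gam (2 ^ k) = Polynomial.X ^ (2 ^ k - 1) := by
  induction k with
  | zero => simp [gam]
  | succ k ih =>
    have hk := Nat.one_le_two_pow (n := k)
    rw [pow_succ', gam_two_mul, ih, ← pow_mul, ← pow_succ']
    congr 1
    omega
end

section
/- Let n ≥ 1 be odd and s ∈ 𝔽₂ⁿ. Then s has a perfect linear complexity profile if and only if s is stable, i.e. s₁ = 1 and s_{j+1} = s_j + s_{j/2} for all even j with 2 ≤ j ≤ n−1. (Theorem of Wang and Massey.) -/
/-!
A polynomial `f` acts on sequences by `(f • s) i = ∑ f_k s (i + k)` (`aeval` at the shift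
operator), so `(f * g) • s = f • (g • s)`, and `f` annihilates `s` up to `N` when `f • s` vanishes
at `1, …, N - deg f`.

Massey's lemma: if `g` annihilates `s` up to `N` but not up to `N + 1`, every annihilator `f` of
`s` up to `N + 1` has `deg f + deg g ≥ N + 1`; otherwise `(f * g) • s`, at a suitable position, is
both zero and a nonzero multiple of the discrepancy of `g`.

Over `𝔽₂`, `c * c = c(X²)`. Let `c` be a minimal annihilator of degree `t + 1` of `s` up to
`2t + 2`. At `1`, `(c * c) • s` is both the discrepancy of `c` at `2t + 3` and `∑ c_k s (2k + 1)`;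
at `0` it is both `c₀ (c • s) 0` and `∑ c_k s (2k)`. If `s` is stable below `t + 1`, these
identities and minimality (which excludes `c₀ = (c • s) 0 = 0`) make the discrepancy equal to
`1 + s (2t + 3) + s (2t + 2) + s (t + 1)`. So the complexity jumps at every odd length exactly
when `s` is stable; for stable `s` the next annihilator is the Berlekamp–Massey update
`X p + a p + b q`.
-/

open Polynomial

/-- `f` is an annihilator (characteristic polynomial) of the first `n` terms of `s`
(indexed from 1): `f = 0` or `∑ₖ f_k s_{j-d+k} = 0` for `d+1 ≤ j ≤ n`, `d = deg f`. -/
def IsAnnihilator {D : Type*} [CommRing D] (s : ℕ → D) (n : ℕ) (f : Polynomial D) : Prop :=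
  f = 0 ∨ ∀ j, f.natDegree + 1 ≤ j → j ≤ n →
    ∑ k ∈ Finset.range (f.natDegree + 1), f.coeff k * s (j - f.natDegree + k) = 0

/-- The linear complexity of the first `n` terms of `s`: the minimal degree of a
nonzero annihilator. -/
noncomputable def LC {D : Type*} [CommRing D] (s : ℕ → D) (n : ℕ) : ℕ :=
  sInf {d : ℕ | ∃ f : Polynomial D, f ≠ 0 ∧ IsAnnihilator s n f ∧ f.natDegree = d}

open Finset

section SeqShift

variable {R : Type*} [CommSemiring R]

variable (R) in
def seqShift : Module.End R (ℕ → R) := LinearMap.funLeft R R Nat.succ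

@[simp]
theorem seqShift_apply (s : ℕ → R) (i : ℕ) : seqShift R s i = s (i + 1) := rfl

theorem seqShift_pow_apply (k : ℕ) (s : ℕ → R) (i : ℕ) : (seqShift R ^ k) s i = s (i + k) := by
  induction k generalizing s with
  | zero => rfl
  | succ k ih => rw [pow_succ, Module.End.mul_apply, ih, seqShift_apply, add_assoc]

theorem aeval_seqShift_pow_apply (m : ℕ) (f : R[X]) (s : ℕ → R) (i : ℕ) :
    aeval (seqShift R ^ m) f s i = ∑ k ∈ range (f.natDegree + 1), f.coeff k * s (i + m * k) := by
  simp [aeval_eq_sum_range, ← pow_mul, seqShift_pow_apply]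

theorem aeval_seqShift_apply (f : R[X]) (s : ℕ → R) (i : ℕ) :
    aeval (seqShift R) f s i = ∑ k ∈ range (f.natDegree + 1), f.coeff k * s (i + k) := by
  simpa using aeval_seqShift_pow_apply 1 f s i

theorem aeval_seqShift_X_mul_apply (f : R[X]) (s : ℕ → R) (i : ℕ) :
    aeval (seqShift R) (X * f) s i = aeval (seqShift R) f s (i + 1) := by
  rw [map_mul, aeval_X, Module.End.mul_apply, seqShift_apply]

theorem aeval_seqShift_smul_apply (a : R) (f : R[X]) (s : ℕ → R) (i : ℕ) :
    aeval (seqShift R) (a • f) s i = a * aeval (seqShift R) f s i := by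
  simp

theorem aeval_seqShift_mul_apply (f g : R[X]) (s : ℕ → R) (i : ℕ) :
    aeval (seqShift R) (f * g) s i = aeval (seqShift R) f (aeval (seqShift R) g s) i := by
  rw [map_mul, Module.End.mul_apply]

theorem aeval_seqShift_apply_eq_single {f : R[X]} {u : ℕ → R} {i : ℕ} (m : ℕ)
    (hu : ∀ k ≤ f.natDegree, k ≠ m → u (i + k) = 0) :
    aeval (seqShift R) f u i = f.coeff m * u (i + m) := by
  rw [aeval_seqShift_apply]
  refine sum_eq_single m (fun k hk hkm => ?_) fun hm => ?_
  · rw [hu k (Nat.lt_succ_iff.1 (mem_range.1 hk)) hkm, mul_zero]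
  · rw [coeff_eq_zero_of_natDegree_lt (by simpa [Nat.lt_succ_iff] using hm), zero_mul]

theorem aeval_seqShift_apply_eq_zero {f : R[X]} {u : ℕ → R} {i : ℕ}
    (hu : ∀ k ≤ f.natDegree, u (i + k) = 0) : aeval (seqShift R) f u i = 0 := by
  rw [aeval_seqShift_apply]
  exact sum_eq_zero fun k hk => by rw [hu k (Nat.lt_succ_iff.1 (mem_range.1 hk)), mul_zero]

end SeqShift

section Annihilator

variable {R : Type*} [CommRing R] {s : ℕ → R} {N M i : ℕ} {f : R[X]}

def Annihilates (s : ℕ → R) (N : ℕ) (f : R[X]) : Prop :=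
  ∀ i, 1 ≤ i → i + f.natDegree ≤ N → aeval (seqShift R) f s i = 0

theorem Annihilates.mono (hf : Annihilates s M f) (h : N ≤ M) : Annihilates s N f :=
  fun i hi hiN => hf i hi (hiN.trans h)

theorem Annihilates.succ (hf : Annihilates s N f) (hi : i + f.natDegree = N + 1)
    (hd : aeval (seqShift R) f s i = 0) : Annihilates s (N + 1) f := by
  intro j hj hjN
  rcases (show j + f.natDegree ≤ N ∨ j = i by omega) with hjN | rfl
  exacts [hf j hj hjN, hd]

theorem isAnnihilator_iff : IsAnnihilator s N f ↔ f = 0 ∨ Annihilates s N f := by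
  refine or_congr Iff.rfl ⟨fun h i hi hiN => ?_, fun h j hj hjN => ?_⟩
  · simpa [aeval_seqShift_apply] using h (i + f.natDegree) (by omega) hiN
  · simpa [aeval_seqShift_apply] using h (j - f.natDegree) (by omega) (by omega)

theorem LC_le (hf : f ≠ 0) (h : Annihilates s N f) : LC s N ≤ f.natDegree :=
  Nat.sInf_le ⟨f, hf, isAnnihilator_iff.2 (Or.inr h), rfl⟩

variable [Nontrivial R]

theorem exists_annihilates_natDegree_eq_LC (s : ℕ → R) (N : ℕ) :
    ∃ f : R[X], f ≠ 0 ∧ Annihilates s N f ∧ f.natDegree = LC s N := by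
  have hX : Annihilates s N (X ^ N : R[X]) := fun i hi hiN => by
    rw [natDegree_X_pow] at hiN; omega
  obtain ⟨f, hf, hann, hdeg⟩ := Nat.sInf_mem (s := {d | ∃ f : R[X], f ≠ 0 ∧ IsAnnihilator s N f ∧
    f.natDegree = d}) ⟨N, X ^ N, (monic_X_pow N).ne_zero, isAnnihilator_iff.2 (Or.inr hX),
    natDegree_X_pow N⟩
  exact ⟨f, hf, (isAnnihilator_iff.1 hann).resolve_left hf, hdeg⟩

theorem LC_mono (h : N ≤ M) : LC s N ≤ LC s M := by
  obtain ⟨f, hf, hann, hdeg⟩ := exists_annihilates_natDegree_eq_LC s M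
  exact hdeg ▸ LC_le hf (hann.mono h)

theorem LC_one_eq_zero (h : s 1 = 0) : LC s 1 = 0 := by
  have hann : Annihilates s 1 (1 : R[X]) := fun i hi hi1 => by
    rw [natDegree_one] at hi1
    obtain rfl : i = 1 := by omega
    simpa using h
  simpa using LC_le one_ne_zero hann

theorem LC_lt_natDegree (hf : f ≠ 0) (hann : Annihilates s N f) (h0 : f.coeff 0 = 0)
    (hd : aeval (seqShift R) f s 0 = 0) : LC s N < f.natDegree := by
  obtain ⟨g, rfl⟩ := X_dvd_iff.2 h0
  have hg : g ≠ 0 := by rintro rfl; simp at hf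
  rw [natDegree_X_mul hg]
  refine Nat.lt_succ_of_le (LC_le hg fun i hi hiN => ?_)
  obtain ⟨j, rfl⟩ : ∃ j, i = j + 1 := ⟨i - 1, by omega⟩
  rw [← aeval_seqShift_X_mul_apply]
  rcases Nat.eq_zero_or_pos j with rfl | hj
  exacts [hd, hann j hj (by rw [natDegree_X_mul hg]; omega)]

end Annihilator

section Massey

variable {R : Type*} [CommRing R] [IsDomain R] {s : ℕ → R} {N i : ℕ} {g : R[X]}

theorem Annihilates.le_natDegree_add_LC (hg : Annihilates s N g) (hi : i + g.natDegree = N + 1)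
    (hd : aeval (seqShift R) g s i ≠ 0) : N + 1 ≤ g.natDegree + LC s (N + 1) := by
  obtain ⟨f, hf, hfann, hfdeg⟩ := exists_annihilates_natDegree_eq_LC s (N + 1)
  rw [← hfdeg]
  by_contra! hlt
  obtain ⟨j, rfl⟩ : ∃ j, i = j + f.natDegree := ⟨i - f.natDegree, by omega⟩
  have hfg : aeval (seqShift R) (f * g) s j =
      f.leadingCoeff * aeval (seqShift R) g s (j + f.natDegree) := by
    rw [aeval_seqShift_mul_apply, aeval_seqShift_apply_eq_single f.natDegree fun k hk hkf =>
      hg _ (by omega) (by omega)]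
    rfl
  have hgf : aeval (seqShift R) (f * g) s j = 0 := by
    rw [mul_comm, aeval_seqShift_mul_apply]
    exact aeval_seqShift_apply_eq_zero fun k hk => hfann _ (by omega) (by omega)
  exact mul_ne_zero (leadingCoeff_ne_zero.2 hf) hd (hfg ▸ hgf)

theorem LC_eq_succ_of_annihilates {t : ℕ} {p q : R[X]} (hq : q.natDegree = t)
    (hqann : Annihilates s (2 * t) q) (hqd : aeval (seqShift R) q s (t + 1) ≠ 0)
    (hp : p.natDegree = t + 1) (hpann : Annihilates s (2 * t + 2) p) :
    LC s (2 * t + 1) = t + 1 ∧ LC s (2 * t + 2) = t + 1 := by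
  have hlow := hqann.le_natDegree_add_LC (by omega) hqd
  have hup := LC_le (ne_zero_of_natDegree_gt (n := t) (by omega)) hpann
  have hmono := LC_mono (s := s) (by omega : 2 * t + 1 ≤ 2 * t + 2)
  omega

end Massey

section BerlekampMassey

variable {K : Type*} [Field K] {s : ℕ → K} {t : ℕ} {p q : K[X]}

theorem exists_annihilates_natDegree_add_two (hp : p.natDegree = t + 1)
    (hpann : Annihilates s (2 * t + 2) p) (hpd : aeval (seqShift K) p s (t + 2) ≠ 0)
    (hq : q.natDegree = t) (hqann : Annihilates s (2 * t) q)
    (hqd : aeval (seqShift K) q s (t + 1) ≠ 0) :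
    ∃ r : K[X], r.natDegree = t + 2 ∧ Annihilates s (2 * t + 4) r := by
  set u := aeval (seqShift K) p s
  set v := aeval (seqShift K) q s
  have hu : ∀ i, 1 ≤ i → i ≤ t + 1 → u i = 0 := fun i hi hit => hpann i hi (by omega)
  have hv : ∀ i, 1 ≤ i → i ≤ t → v i = 0 := fun i hi hit => hqann i hi (by omega)
  obtain ⟨b, hb⟩ : ∃ b, u (t + 2) + b * v (t + 1) = 0 :=
    ⟨-u (t + 2) / v (t + 1), by field_simp; ring⟩
  obtain ⟨a, ha⟩ : ∃ a, u (t + 3) + a * u (t + 2) + b * v (t + 2) = 0 :=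
    ⟨-(u (t + 3) + b * v (t + 2)) / u (t + 2), by field_simp; ring⟩
  have hp0 : p ≠ 0 := ne_zero_of_natDegree_gt (n := t) (by omega)
  have hlow : (a • p + b • q).natDegree < (X * p).natDegree := by
    rw [natDegree_X_mul hp0]
    exact (natDegree_add_le _ _).trans_lt (max_lt ((natDegree_smul_le _ _).trans_lt (by omega))
      ((natDegree_smul_le _ _).trans_lt (by omega)))
  have hr : (X * p + (a • p + b • q)).natDegree = t + 2 := by
    rw [natDegree_add_eq_left_of_natDegree_lt hlow, natDegree_X_mul hp0, hp]
  refine ⟨X * p + (a • p + b • q), hr, fun i hi hiN => ?_⟩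
  simp only [map_add, LinearMap.add_apply, Pi.add_apply, aeval_seqShift_X_mul_apply,
    aeval_seqShift_smul_apply]
  change u (i + 1) + (a * u i + b * v i) = 0
  rw [hr] at hiN
  rcases (show i ≤ t ∨ i = t + 1 ∨ i = t + 2 by omega) with hit | rfl | rfl
  · simp [hu (i + 1) (by omega) (by omega), hu i hi (by omega), hv i hi hit]
  · linear_combination hb + a * hu (t + 1) hi le_rfl
  · linear_combination ha

end BerlekampMassey

section Stable

def IsStableUpTo (s : ℕ → ZMod 2) (m : ℕ) : Prop :=
  s 1 = 1 ∧ ∀ k, 1 ≤ k → k ≤ m → s (2 * k + 1) = s (2 * k) + s k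

variable {s : ℕ → ZMod 2} {t m : ℕ}

theorem IsStableUpTo.mono (hs : IsStableUpTo s m) (h : t ≤ m) : IsStableUpTo s t :=
  ⟨hs.1, fun k hk hkt => hs.2 k hk (hkt.trans h)⟩

theorem isStableUpTo_succ_iff : IsStableUpTo s (m + 1) ↔
    IsStableUpTo s m ∧ s (2 * (m + 1) + 1) = s (2 * (m + 1)) + s (m + 1) := by
  refine ⟨fun hs => ⟨hs.mono m.le_succ, hs.2 _ m.succ_pos le_rfl⟩, fun ⟨hs, hm⟩ => ⟨hs.1, ?_⟩⟩
  intro k hk hkm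
  rcases Nat.lt_or_eq_of_le hkm with hkm | rfl
  exacts [hs.2 k hk (Nat.lt_succ_iff.1 hkm), hm]

theorem eq_one_of_ne_zero_zmod_two {x : ZMod 2} (hx : x ≠ 0) : x = 1 := by
  revert x; decide

theorem aeval_seqShift_mul_self_apply (c : (ZMod 2)[X]) (s : ℕ → ZMod 2) (i : ℕ) :
    aeval (seqShift _) (c * c) s i = ∑ k ∈ range (c.natDegree + 1), c.coeff k * s (i + 2 * k) := by
  rw [← sq, ← ZMod.expand_card, expand_aeval, aeval_seqShift_pow_apply]

theorem discrepancy_ne_zero_iff {c : (ZMod 2)[X]} (hs : IsStableUpTo s t)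
    (hc : c.natDegree = t + 1) (hann : Annihilates s (2 * t + 2) c)
    (hLC : t + 1 ≤ LC s (2 * t + 2)) :
    aeval (seqShift _) c s (t + 2) ≠ 0 ↔ s (2 * (t + 1) + 1) = s (2 * (t + 1)) + s (t + 1) := by
  have hu : ∀ i, 1 ≤ i → i ≤ t + 1 → aeval (seqShift _) c s i = 0 :=
    fun i hi hit => hann i hi (by omega)
  have hc0 : c ≠ 0 := ne_zero_of_natDegree_gt (n := t) (by omega)
  have hlc : c.coeff (t + 1) = 1 := hc ▸ eq_one_of_ne_zero_zmod_two (leadingCoeff_ne_zero.2 hc0)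
  have h1 : aeval (seqShift _) (c * c) s 1 = aeval (seqShift _) c s (t + 2) := by
    rw [aeval_seqShift_mul_apply, aeval_seqShift_apply_eq_single (t + 1)
      fun k hk hkt => hu _ (by omega) (by omega), hlc, one_mul, add_comm]
  have h0 : aeval (seqShift _) (c * c) s 0 = c.coeff 0 * aeval (seqShift _) c s 0 := by
    rw [aeval_seqShift_mul_apply, aeval_seqShift_apply_eq_single 0
      fun k hk hk0 => hu _ (by omega) (by omega)]
  have hmin : ¬(c.coeff 0 = 0 ∧ aeval (seqShift _) c s 0 = 0) :=
    fun ⟨h, h'⟩ => (LC_lt_natDegree hc0 hann h h').not_ge (hc ▸ hLC)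
  set E : ℕ → ZMod 2 := fun k => s (2 * k + 1) - (s (2 * k) + s k)
  have hE : ∑ k ∈ range (t + 2), c.coeff k * E k = c.coeff 0 + E (t + 1) := by
    rw [sum_eq_add 0 (t + 1) (by omega) (fun k hk hk' => ?_) (by simp) (by simp)]
    · simp [E, hs.1, hlc, CharTwo.add_self_eq_zero]
    · simp only [E, hs.2 k (by omega) (by simp at hk; omega), sub_self, mul_zero]
  have key : aeval (seqShift _) c s (t + 2) =
      aeval (seqShift _) (c * c) s 0 + aeval (seqShift _) c s 0 +
        ∑ k ∈ range (t + 2), c.coeff k * E k := by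
    rw [← h1, aeval_seqShift_mul_self_apply, aeval_seqShift_mul_self_apply, aeval_seqShift_apply,
      hc, ← sum_add_distrib, ← sum_add_distrib]
    refine sum_congr rfl fun k _ => ?_
    simp only [E, zero_add]; ring_nf
  have hfin : ∀ x y e : ZMod 2, ¬(x = 0 ∧ y = 0) → (x * y + y + (x + e) ≠ 0 ↔ e = 0) := by
    decide
  rw [key, hE, h0, hfin _ _ _ hmin, sub_eq_zero]

end Stable

section Profile

variable {s : ℕ → ZMod 2}

def HasPerfectProfile {R : Type*} [CommRing R] (s : ℕ → R) (n : ℕ) : Prop :=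
  ∀ j, 1 ≤ j → j ≤ n → LC s j = (j + 1) / 2

theorem exists_annihilates_of_isStableUpTo {t : ℕ} (hs : IsStableUpTo s t) :
    ∃ p q : (ZMod 2)[X], p.natDegree = t + 1 ∧ Annihilates s (2 * t + 2) p ∧
      q.natDegree = t ∧ Annihilates s (2 * t) q ∧ aeval (seqShift _) q s (t + 1) ≠ 0 := by
  induction t with
  | zero =>
    refine ⟨X + C (s 2), 1, natDegree_X_add_C _, fun i hi hi2 => ?_, natDegree_one,
      fun i hi hi0 => by omega, by simp [hs.1]⟩
    obtain rfl : i = 1 := by rw [natDegree_X_add_C] at hi2; omega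
    simp [hs.1, CharTwo.add_self_eq_zero]
  | succ t ih =>
    obtain ⟨hs', hst⟩ := isStableUpTo_succ_iff.1 hs
    obtain ⟨p, q, hp, hpann, hq, hqann, hqd⟩ := ih hs'
    have hLC := (LC_eq_succ_of_annihilates hq hqann hqd hp hpann).2
    have hpd := (discrepancy_ne_zero_iff hs' hp hpann hLC.ge).2 hst
    obtain ⟨r, hr, hrann⟩ := exists_annihilates_natDegree_add_two hp hpann hpd hq hqann hqd
    exact ⟨r, p, hr, hrann, hp, hpann, hpd⟩

theorem IsStableUpTo.hasPerfectProfile {m : ℕ} (hs : IsStableUpTo s m) :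
    HasPerfectProfile s (2 * m + 1) := by
  intro j hj hjm
  obtain ⟨t, htm, hj | hj⟩ : ∃ t ≤ m, j = 2 * t + 1 ∨ j = 2 * t + 2 :=
    ⟨(j - 1) / 2, by omega, by omega⟩
  all_goals
    obtain ⟨p, q, hp, hpann, hq, hqann, hqd⟩ := exists_annihilates_of_isStableUpTo (hs.mono htm)
    have := LC_eq_succ_of_annihilates hq hqann hqd hp hpann
    subst hj
    omega

theorem HasPerfectProfile.isStableUpTo {m : ℕ} (h : HasPerfectProfile s (2 * m + 1)) :
    IsStableUpTo s m := by
  induction m with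
  | zero =>
    refine ⟨eq_one_of_ne_zero_zmod_two fun h1 => ?_, fun k hk hk0 => by omega⟩
    simpa [LC_one_eq_zero h1] using h 1 le_rfl le_rfl
  | succ m ih =>
    have hs := ih fun j hj hjm => h j hj (by omega)
    have h_even : LC s (2 * m + 2) = m + 1 := by rw [h _ (by omega) (by omega)]; omega
    have h_odd : LC s (2 * m + 2 + 1) = m + 2 := by rw [h _ (by omega) (by omega)]; omega
    obtain ⟨c, hc0, hcann, hcdeg⟩ := exists_annihilates_natDegree_eq_LC s (2 * m + 2)
    have hcd : aeval (seqShift _) c s (m + 2) ≠ 0 := fun hd => by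
      have := LC_le hc0 (hcann.succ (by omega) hd)
      omega
    exact isStableUpTo_succ_iff.2
      ⟨hs, (discrepancy_ne_zero_iff hs (hcdeg.trans h_even) hcann h_even.ge).1 hcd⟩

end Profile

theorem plcp_iff_stable_general (n : ℕ) (hodd : Odd n) (s : ℕ → ZMod 2) :
    (∀ j, 1 ≤ j → j ≤ n → LC s j = (j + 1) / 2) ↔
      (s 1 = 1 ∧ ∀ j, 2 ≤ j → j ≤ n - 1 → Even j → s (j + 1) = s j + s (j / 2)) := by
  obtain ⟨m, rfl⟩ := hodd
  have hstable : IsStableUpTo s m ↔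
      (s 1 = 1 ∧ ∀ j, 2 ≤ j → j ≤ 2 * m + 1 - 1 → Even j → s (j + 1) = s j + s (j / 2)) := by
    refine and_congr_right fun _ => ⟨fun h j hj hjm ⟨k, hk⟩ => ?_, fun h k hk hkm => ?_⟩
    · subst hk
      simpa [← two_mul] using h k (by omega) (by omega)
    · simpa using h (2 * k) (by omega) (by omega) (even_two_mul k)
  rw [← hstable]
  exact ⟨HasPerfectProfile.isStableUpTo, IsStableUpTo.hasPerfectProfile⟩

theorem plcp_iff_stable (n : ℕ) (hn : 1 ≤ n) (hodd : Odd n) (s : ℕ → ZMod 2) :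
    (∀ j, 1 ≤ j → j ≤ n → LC s j = (j + 1) / 2) ↔
      (s 1 = 1 ∧ ∀ j, 2 ≤ j → j ≤ n - 1 → Even j → s (j + 1) = s j + s (j / 2)) :=
  plcp_iff_stable_general n hodd s
end
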